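/- Let $\lambda \in (0,1)$, set $Q := 1-\lambda^2$, and let $z \in [0,1]$. Define $p_\ell := 2^{-\ell}(1-Q)^{\ell-1}\, {}_2F_1(\ell/2, (\ell+1)/2; 2; Q)$ for $\ell \geq 1$. Then $\sum_{\ell \geq 1} p_\ell z^\ell = \frac{z}{1-\lambda^2}\left(1 - \frac{\lambda^2 z}{2} - \frac{\lambda}{2}\sqrt{\lambda^2 z^2 - 4z + 4}\right)$. -/

import Mathlib

open Real

noncomputable def poch (a : ℝ) (n : ℕ) : ℝ := (ascPochhammer ℝ n).eval a

/-- The Gauss hypergeometric series `₂F₁(a,b;c;x)`. -/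
noncomputable def hyp2F1 (a b c x : ℝ) : ℝ :=
  ∑' n : ℕ, poch a n * poch b n / (poch c n * (n.factorial : ℝ)) * x ^ n

/-!
By Legendre's duplication formula the `n`-th coefficient of `₂F₁((ℓ+1)/2, (ℓ+2)/2; 2; Q)` is
`C(ℓ+2n, 2n) Cat n / 4ⁿ`, so with `x = λ²z/2` the left side is the nonnegative double series
`(z/2) ∑_{ℓ,n} C(ℓ+2n, 2n) Cat n (Q/4)ⁿ xˡ`. Summing over `ℓ` first (negative binomial series)
leaves `(z/2)/(1-x) ∑_n Cat n wⁿ` with `w = Q/(4(1-x)²)`, and the Catalan generating function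
`(1 - √(1-4w))/(2w)` gives the closed form, because `(1-x)² - Q = (λ/2)² (λ²z² - 4z + 4)`.
-/

open Nat Finset

lemma poch_succ (a : ℝ) (n : ℕ) : poch a (n + 1) = poch a n * (a + n) :=
  ascPochhammer_succ_eval n a

lemma poch_natCast_add_one (ℓ n : ℕ) : poch ((ℓ : ℝ) + 1) n = n ! * (ℓ + n).choose n := by
  rw [poch, ← Nat.cast_succ, ascPochhammer_nat_eq_natCast_ascFactorial,
    Nat.ascFactorial_eq_factorial_mul_choose]
  push_cast; rfl

lemma poch_two (n : ℕ) : poch 2 n = (n + 1)! := by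
  have h := poch_natCast_add_one 1 n
  norm_num at h
  rw [h, Nat.factorial_succ, add_comm 1 n, Nat.choose_succ_self_right]
  push_cast; ring

lemma poch_mul_poch_add_half (a : ℝ) (n : ℕ) :
    poch a n * poch (a + 1 / 2) n = poch (2 * a) (2 * n) / 4 ^ n := by
  induction n with
  | zero => simp [poch]
  | succ n ih =>
    rw [poch_succ, poch_succ, show 2 * (n + 1) = 2 * n + 1 + 1 by ring, poch_succ, poch_succ]
    push_cast
    linear_combination (a + n) * (a + 1 / 2 + n) * ih

lemma catalan_mul_factorial_mul_factorial_succ (n : ℕ) :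
    catalan n * (n ! * (n + 1)!) = (2 * n)! := by
  have h := Nat.choose_mul_factorial_mul_factorial (show n ≤ 2 * n by omega)
  rw [show 2 * n - n = n by omega, ← centralBinom_eq_two_mul_choose,
    ← succ_mul_catalan_eq_centralBinom] at h
  rw [← h, factorial_succ]
  ring

lemma hyp2F1_coeff_eq_choose_mul_catalan (ℓ n : ℕ) :
    poch (((ℓ : ℝ) + 1) / 2) n * poch (((ℓ : ℝ) + 2) / 2) n / (poch 2 n * n !) =
      (ℓ + 2 * n).choose (2 * n) * catalan n / 4 ^ n := by
  have hdup := poch_mul_poch_add_half (((ℓ : ℝ) + 1) / 2) n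
  rw [show ((ℓ : ℝ) + 1) / 2 + 1 / 2 = ((ℓ : ℝ) + 2) / 2 by ring,
    show 2 * (((ℓ : ℝ) + 1) / 2) = ℓ + 1 by ring, poch_natCast_add_one,
    ← catalan_mul_factorial_mul_factorial_succ] at hdup
  rw [hdup, poch_two]
  push_cast
  field_simp

lemma hyp2F1_eq_tsum_choose_mul_catalan (ℓ : ℕ) (q : ℝ) :
    hyp2F1 (((ℓ : ℝ) + 1) / 2) (((ℓ : ℝ) + 2) / 2) 2 q =
      ∑' n : ℕ, (ℓ + 2 * n).choose (2 * n) * catalan n * (q / 4) ^ n := by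
  refine tsum_congr fun n => ?_
  rw [hyp2F1_coeff_eq_choose_mul_catalan, div_pow]
  ring

lemma sum_range_sum_antidiagonal_mul_le_sq {t : ℕ → ℝ} (ht : ∀ i, 0 ≤ t i) (N : ℕ) :
    ∑ m ∈ range N, ∑ ij ∈ antidiagonal m, t ij.1 * t ij.2 ≤ (∑ i ∈ range N, t i) ^ 2 := by
  simp_rw [Nat.sum_antidiagonal_eq_sum_range_succ fun i j => t i * t j]
  rw [sum_range_diag_flip N fun i j => t i * t j, sq, sum_mul_sum]
  exact sum_le_sum fun i _ => sum_le_sum_of_subset_of_nonneg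
    (range_subset_range.2 (Nat.sub_le N i)) fun j _ _ => mul_nonneg (ht i) (ht j)

lemma catalan_mul_pow_succ (w : ℝ) (n : ℕ) :
    (catalan (n + 1) : ℝ) * w ^ (n + 1) =
      w * ∑ ij ∈ antidiagonal n, (catalan ij.1 * w ^ ij.1) * (catalan ij.2 * w ^ ij.2) := by
  rw [catalan_succ', Nat.cast_sum, sum_mul, mul_sum]
  refine sum_congr rfl fun ij hij => ?_
  rw [HasAntidiagonal.mem_antidiagonal] at hij
  rw [← hij]
  push_cast
  ring

lemma sum_range_catalan_mul_pow_le {w r : ℝ} (hw : 0 ≤ w) (hr0 : 0 ≤ r) (hr : 1 + w * r ^ 2 = r)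
    (N : ℕ) : ∑ n ∈ range N, (catalan n : ℝ) * w ^ n ≤ r := by
  induction N with
  | zero => simpa using hr0
  | succ N ih =>
    calc ∑ n ∈ range (N + 1), (catalan n : ℝ) * w ^ n
        = 1 + w * ∑ m ∈ range N, ∑ ij ∈ antidiagonal m,
            (catalan ij.1 * w ^ ij.1) * (catalan ij.2 * w ^ ij.2) := by
          rw [sum_range_succ', mul_sum]
          simp [catalan_mul_pow_succ, add_comm]
      _ ≤ 1 + w * (∑ n ∈ range N, (catalan n : ℝ) * w ^ n) ^ 2 := by
          gcongr
          exact sum_range_sum_antidiagonal_mul_le_sq (t := fun n => (catalan n : ℝ) * w ^ n)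
            (fun i => by positivity) N
      _ ≤ 1 + w * r ^ 2 := by gcongr
      _ = r := hr

lemma tsum_catalan_mul_pow_eq {w : ℝ} (hw : 0 ≤ w)
    (hs : Summable fun n => (catalan n : ℝ) * w ^ n) :
    ∑' n, (catalan n : ℝ) * w ^ n = 1 + w * (∑' n, (catalan n : ℝ) * w ^ n) ^ 2 := by
  have hnorm : Summable fun n => ‖(catalan n : ℝ) * w ^ n‖ :=
    hs.congr fun n => (Real.norm_of_nonneg (by positivity)).symm
  rw [sq, tsum_mul_tsum_eq_tsum_sum_antidiagonal_of_summable_norm hnorm hnorm, ← tsum_mul_left,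
    hs.tsum_eq_zero_add]
  simp [catalan_mul_pow_succ]

lemma hasSum_catalan_mul_pow {w : ℝ} (hw0 : 0 < w) (hw : 4 * w ≤ 1) :
    HasSum (fun n => (catalan n : ℝ) * w ^ n) ((1 - √(1 - 4 * w)) / (2 * w)) := by
  set s := √(1 - 4 * w)
  have hs2 : s ^ 2 = 1 - 4 * w := Real.sq_sqrt (by linarith)
  have hs0 : 0 ≤ s := Real.sqrt_nonneg _
  have hr0 : 0 ≤ (1 - s) / (2 * w) := div_nonneg (by nlinarith) (by positivity)
  have hr : 1 + w * ((1 - s) / (2 * w)) ^ 2 = (1 - s) / (2 * w) := by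
    field_simp
    linear_combination hs2
  have hbound := sum_range_catalan_mul_pow_le hw0.le hr0 hr
  have hsum := summable_of_sum_range_le (fun n => by positivity) hbound
  have hle := Real.tsum_le_of_sum_range_le (fun n => by positivity) hbound
  have hfix := tsum_catalan_mul_pow_eq hw0.le hsum
  set c := ∑' n, (catalan n : ℝ) * w ^ n
  -- `c` is a root of `w c² - c + 1`; the bound `c ≤ (1 - s) / (2w)` selects the smaller root.
  rw [le_div_iff₀ (by positivity)] at hle
  have hc : c = (1 - s) / (2 * w) := by
    rw [eq_div_iff (by positivity)]
    nlinarith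
  exact hc ▸ hsum.hasSum

lemma hasSum_tsum_comm_of_nonneg {α β : Type*} {f : α → β → ℝ} (hf : ∀ a b, 0 ≤ f a b)
    {g : α → ℝ} {s : ℝ} (hrow : ∀ a, HasSum (f a) (g a)) (hg : HasSum g s) :
    HasSum (fun b => ∑' a, f a b) s := by
  have hF : Summable (Function.uncurry f) :=
    (summable_prod_of_nonneg fun p => hf p.1 p.2).2
      ⟨fun a => (hrow a).summable, by simpa only [(hrow _).tsum_eq] using hg.summable⟩
  have hFs : HasSum (Function.uncurry f) s :=
    (hF.hasSum.prod_fiberwise hrow).unique hg ▸ hF.hasSum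
  have hswap : HasSum (fun p : β × α => f p.2 p.1) s :=
    (Equiv.prodComm β α).hasSum_iff.2 hFs
  exact hswap.prod_fiberwise fun b => (hF.prod_symm.prod_factor b).hasSum

lemma hasSum_tsum_choose_mul_catalan {x y : ℝ} (hx0 : 0 ≤ x) (hx1 : x < 1) (hy : 0 < y)
    (hxy : 4 * y ≤ (1 - x) ^ 2) :
    HasSum (fun ℓ : ℕ => (∑' n : ℕ, ((ℓ + 2 * n).choose (2 * n) : ℝ) * catalan n * y ^ n) * x ^ ℓ)
      ((1 - x - √((1 - x) ^ 2 - 4 * y)) / (2 * y)) := by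
  have h1x : 0 < 1 - x := by linarith
  set w := y / (1 - x) ^ 2 with hw
  have hrow (n : ℕ) : HasSum (fun ℓ : ℕ => catalan n * y ^ n * ((ℓ + 2 * n).choose (2 * n) * x ^ ℓ))
      ((1 - x)⁻¹ * (catalan n * w ^ n)) := by
    have h := (hasSum_choose_mul_geometric_of_norm_lt_one (2 * n)
      (by rwa [Real.norm_of_nonneg hx0] : ‖x‖ < 1)).mul_left (catalan n * y ^ n)
    rw [show (1 - x)⁻¹ * (catalan n * w ^ n) = catalan n * y ^ n * (1 / (1 - x) ^ (2 * n + 1)) by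
      rw [hw, div_pow, pow_succ _ (2 * n), pow_mul]; field_simp]
    exact h
  have hcat := (hasSum_catalan_mul_pow (w := w) (by positivity)
    (by rwa [← mul_div_assoc, div_le_one (by positivity)])).mul_left (1 - x)⁻¹
  have hsqrt : √(1 - 4 * w) = √((1 - x) ^ 2 - 4 * y) / (1 - x) := by
    rw [show 1 - 4 * w = ((1 - x) ^ 2 - 4 * y) / (1 - x) ^ 2 by rw [hw]; field_simp,
      Real.sqrt_div' _ (by positivity), Real.sqrt_sq h1x.le]
  convert hasSum_tsum_comm_of_nonneg (fun n ℓ => by positivity) hrow hcat using 1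
  · ext ℓ
    rw [← tsum_mul_right]
    exact tsum_congr fun n => by ring
  · rw [hsqrt, hw]; field_simp

/-- The `ℓ`-th summand is `p_{ℓ+1} z^{ℓ+1}`. -/
theorem progeny_pgf (lam z : ℝ) (hl0 : 0 < lam) (hl1 : lam < 1) (hz0 : 0 ≤ z) (hz1 : z ≤ 1) :
    (∑' ℓ : ℕ, (1 / 2 : ℝ) ^ (ℓ + 1) * (1 - (1 - lam ^ 2)) ^ ℓ *
        hyp2F1 (((ℓ : ℝ) + 1) / 2) (((ℓ : ℝ) + 2) / 2) 2 (1 - lam ^ 2) * z ^ (ℓ + 1)) =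
      z / (1 - lam ^ 2) *
        (1 - lam ^ 2 * z / 2 - lam / 2 * Real.sqrt (lam ^ 2 * z ^ 2 - 4 * z + 4)) := by
  have hQ : 0 < 1 - lam ^ 2 := by nlinarith
  have hdisc : (1 - lam ^ 2 * z / 2) ^ 2 - 4 * ((1 - lam ^ 2) / 4) =
      (lam / 2) ^ 2 * (lam ^ 2 * z ^ 2 - 4 * z + 4) := by ring
  have hquad : 0 ≤ lam ^ 2 * z ^ 2 - 4 * z + 4 := by nlinarith
  have hgf := hasSum_tsum_choose_mul_catalan (x := lam ^ 2 * z / 2) (y := (1 - lam ^ 2) / 4)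
    (by positivity) (by nlinarith) (by positivity) (by rw [← sub_nonneg, hdisc]; positivity)
  rw [hdisc, Real.sqrt_mul (by positivity), Real.sqrt_sq (by positivity)] at hgf
  calc _ = ∑' ℓ : ℕ, z / 2 * ((∑' n : ℕ, ((ℓ + 2 * n).choose (2 * n) : ℝ) * catalan n *
          ((1 - lam ^ 2) / 4) ^ n) * (lam ^ 2 * z / 2) ^ ℓ) :=
        tsum_congr fun ℓ => by rw [hyp2F1_eq_tsum_choose_mul_catalan]; ring
    _ = _ := by
        rw [tsum_mul_left, hgf.tsum_eq]
        field_simp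
        ring
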